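/- arXiv:1407.7819 — 2 statements merged into one kernel-verified Lean document; each statement's English description precedes it below -/
import Mathlib

section
/- (Sure screening) Under Assumption 1 (min_{(a,b)∈E} |σ_{ab}| ≥ C_1 n^{−κ} for some C_1 > 0, 0 < κ < 1/2), and assuming log(p) = C_3 n^ξ with ξ ∈ (0, 1−2κ), set γ_n = (2/3)C_1 n^{−κ}. Then there exist constants C_4, C_5 > 0 such that P(E ⊆ Ê_{γ_n}) ≥ 1 − C_4 exp(−C_5 n^{1−2κ}), where Ê_{γ_n} = {(a,b): a < b, |X_a^T X_b|/n > γ_n}. -/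
/-!
For an edge `(a, b)` the products `W i = X_{ia} X_{ib}` are independent with mean `σ_{ab}`.
Polarisation writes `W = ((X_a + X_b)² - (X_a - X_b)²) / 4`, and the square of a centred Gaussian
of variance `v` has moment generating function `(1 - 2cv)^{-1/2}`; with unit variances this gives
`E exp (t W) ≤ exp (σ_{ab} t + 20 t²)` for `|t| ≤ 1/8`. A Chernoff bound then makes
`|∑ W i - n σ_{ab}| ≥ n ε` exponentially unlikely, and with `ε = C₁ n^{-κ} / 3` the threshold
`(2/3) C₁ n^{-κ}` is missed with probability at most `2 exp (-c n^{1-2κ})`. The union bound over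
`|E| ≤ p² = exp (2 C₃ n^ξ)` edges costs only a constant factor because `ξ < 1 - 2κ`.
-/

open MeasureTheory ProbabilityTheory Finset Real
open scoped NNReal

lemma gaussianPDFReal_mul_exp_mul_sq {v : ℝ≥0} (hv : v ≠ 0) (c x : ℝ) :
    gaussianPDFReal 0 v x * exp (c * x ^ 2) =
      (√(2 * π * v))⁻¹ * exp (-((1 - 2 * c * v) / (2 * v)) * x ^ 2) := by
  rw [gaussianPDFReal, mul_assoc, ← exp_add]
  congr 2
  field_simp
  ring

lemma integrable_exp_mul_sq_gaussianReal {v : ℝ≥0} {c : ℝ} (hc : 2 * c * v < 1) :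
    Integrable (fun x => exp (c * x ^ 2)) (gaussianReal 0 v) := by
  rcases eq_or_ne v 0 with rfl | hv
  · rw [gaussianReal_zero_var]
    exact integrable_dirac (by simp)
  have hb : 0 < (1 - 2 * c * v) / (2 * v) := div_pos (by linarith) (by positivity)
  rw [gaussianReal_of_var_ne_zero _ hv, integrable_withDensity_iff_integrable_smul'
    (measurable_gaussianPDF 0 v) (ae_of_all _ fun _ => gaussianPDF_lt_top)]
  simp_rw [toReal_gaussianPDF, smul_eq_mul, gaussianPDFReal_mul_exp_mul_sq hv]
  exact (integrable_exp_neg_mul_sq hb).const_mul _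

lemma integral_exp_mul_sq_gaussianReal {v : ℝ≥0} {c : ℝ} (hc : 2 * c * v < 1) :
    ∫ x, exp (c * x ^ 2) ∂gaussianReal 0 v = (√(1 - 2 * c * v))⁻¹ := by
  rcases eq_or_ne v 0 with rfl | hv
  · simp [gaussianReal_zero_var]
  rw [integral_gaussianReal_eq_integral_smul hv]
  simp_rw [smul_eq_mul, gaussianPDFReal_mul_exp_mul_sq hv, integral_const_mul, integral_gaussian,
    ← sqrt_inv, ← sqrt_mul (inv_nonneg.2 (by positivity : (0:ℝ) ≤ 2 * π * v))]
  congr 1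
  field_simp

lemma integral_sq_gaussianReal (v : ℝ≥0) : ∫ x, x ^ 2 ∂gaussianReal 0 v = v := by
  rw [← variance_id_gaussianReal (μ := 0), variance_of_integral_eq_zero aemeasurable_id (by simp)]
  rfl

lemma integrable_sq_gaussianReal (v : ℝ≥0) : Integrable (fun x => x ^ 2) (gaussianReal 0 v) :=
  (memLp_id_gaussianReal 2).integrable_sq

lemma inv_sqrt_one_sub_le_exp {x : ℝ} (hx : x ≤ 1 / 2) :
    (√(1 - x))⁻¹ ≤ exp (x / 2 + x ^ 2) := by
  have hpos : 0 < 1 - x := by linarith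
  have hdiv : x / (1 - x) ≤ x + 2 * x ^ 2 := by
    rw [div_le_iff₀ hpos]
    nlinarith [sq_nonneg x]
  have hinv : (1 - x)⁻¹ ≤ exp (x + 2 * x ^ 2) :=
    calc (1 - x)⁻¹ = x / (1 - x) + 1 := by field_simp; ring
      _ ≤ exp (x / (1 - x)) := add_one_le_exp _
      _ ≤ exp (x + 2 * x ^ 2) := exp_le_exp.2 hdiv
  calc (√(1 - x))⁻¹ = √((1 - x)⁻¹) := (sqrt_inv _).symm
    _ ≤ √(exp (x + 2 * x ^ 2)) := sqrt_le_sqrt hinv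
    _ = exp (x / 2 + x ^ 2) := by rw [← exp_half]; ring_nf

lemma inv_sqrt_add_inv_sqrt_le_exp {σ t : ℝ} (hσ : |σ| ≤ 1) (ht : |t| ≤ 1 / 8) :
    ((√(1 - t * (2 + 2 * σ)))⁻¹ + (√(1 + t * (2 - 2 * σ)))⁻¹) / 2 ≤
      exp (σ * t + 20 * t ^ 2) := by
  rw [abs_le] at hσ ht
  have hsq₁ : (t * (2 + 2 * σ)) ^ 2 ≤ 16 * t ^ 2 := by
    rw [mul_pow]
    nlinarith [mul_le_mul_of_nonneg_left (by nlinarith : (2 + 2 * σ) ^ 2 ≤ 16) (sq_nonneg t)]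
  have hsq₂ : (-(t * (2 - 2 * σ))) ^ 2 ≤ 16 * t ^ 2 := by
    rw [neg_sq, mul_pow]
    nlinarith [mul_le_mul_of_nonneg_left (by nlinarith : (2 - 2 * σ) ^ 2 ≤ 16) (sq_nonneg t)]
  have h₁ : (√(1 - t * (2 + 2 * σ)))⁻¹ ≤ exp (σ * t + 16 * t ^ 2 + t) :=
    (inv_sqrt_one_sub_le_exp (by nlinarith)).trans (exp_le_exp.2 (by linarith))
  have h₂ : (√(1 + t * (2 - 2 * σ)))⁻¹ ≤ exp (σ * t + 16 * t ^ 2 + -t) := by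
    rw [← sub_neg_eq_add]
    exact (inv_sqrt_one_sub_le_exp (by nlinarith)).trans (exp_le_exp.2 (by linarith))
  calc _ ≤ (exp (σ * t + 16 * t ^ 2 + t) + exp (σ * t + 16 * t ^ 2 + -t)) / 2 := by linarith
    _ = exp (σ * t + 16 * t ^ 2) * cosh t := by
        rw [cosh_eq, exp_add (σ * t + 16 * t ^ 2) t, exp_add (σ * t + 16 * t ^ 2) (-t)]; ring
    _ ≤ exp (σ * t + 16 * t ^ 2) * exp (t ^ 2 / 2) := by gcongr; exact cosh_le_exp_half_sq t
    _ ≤ exp (σ * t + 20 * t ^ 2) := by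
        rw [← exp_add]; exact exp_le_exp.2 (by nlinarith [sq_nonneg t])

lemma exp_mul_mul_le (t y z : ℝ) :
    exp (t * (y * z)) ≤ (exp (t / 2 * (y + z) ^ 2) + exp (-t / 2 * (y - z) ^ 2)) / 2 := by
  have h := convexOn_exp.2 (Set.mem_univ (t / 2 * (y + z) ^ 2))
    (Set.mem_univ (-t / 2 * (y - z) ^ 2)) (by norm_num : (0 : ℝ) ≤ 1 / 2)
    (by norm_num : (0 : ℝ) ≤ 1 / 2) (by norm_num)
  simp only [smul_eq_mul] at h
  calc exp (t * (y * z))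
      = exp (1 / 2 * (t / 2 * (y + z) ^ 2) + 1 / 2 * (-t / 2 * (y - z) ^ 2)) := by ring_nf
    _ ≤ _ := h
    _ = _ := by ring

lemma exists_mul_rpow_le_mul_rpow_add {ξ δ C c : ℝ} (hξ : 0 ≤ ξ) (hξδ : ξ < δ) (hC : 0 < C)
    (hc : 0 < c) : ∃ K, ∀ x : ℝ, 0 ≤ x → C * x ^ ξ ≤ c * x ^ δ + K := by
  set R := (C / c) ^ (δ - ξ)⁻¹
  have hR : 0 < R := by positivity
  refine ⟨C * R ^ ξ, fun x hx => ?_⟩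
  rcases le_total x R with hxR | hRx
  · have : C * x ^ ξ ≤ C * R ^ ξ := by gcongr
    nlinarith [rpow_nonneg hx δ]
  · have hx₀ : 0 < x := hR.trans_le hRx
    have hpow : C / c ≤ x ^ (δ - ξ) := by
      calc C / c = R ^ (δ - ξ) := by
            rw [← rpow_mul (by positivity), inv_mul_cancel₀ (by linarith), rpow_one]
        _ ≤ x ^ (δ - ξ) := by gcongr
    calc C * x ^ ξ = c * (C / c * x ^ ξ) := by field_simp
      _ ≤ c * (x ^ (δ - ξ) * x ^ ξ) := by gcongr
      _ = c * x ^ δ := by rw [← rpow_add hx₀]; ring_nf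
      _ ≤ c * x ^ δ + C * R ^ ξ := le_add_of_nonneg_right (by positivity)

lemma mul_rpow_one_sub_two_mul_le {n κ C : ℝ} (hn : 1 ≤ n) (hκ : 0 ≤ κ) (hC : 0 < C) :
    min (C / 120) (1 / 8) * C / 6 * n ^ (1 - 2 * κ) ≤
      n * (min (C * n ^ (-κ) / 120) (1 / 8) * (C * n ^ (-κ)) / 6) := by
  have hn₀ : 0 < n := by linarith
  set x := n ^ (-κ)
  have hx₀ : 0 < x := by positivity
  have hx₁ : x ≤ 1 := rpow_le_one_of_one_le_of_nonpos hn (by linarith)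
  have hnx : n ^ (1 - 2 * κ) = n * x ^ 2 := by
    rw [sub_eq_add_neg, rpow_add hn₀, rpow_one, ← rpow_natCast, ← rpow_mul hn₀.le]
    ring_nf
  have hmin : min (C / 120) (1 / 8) * x ≤ min (C * x / 120) (1 / 8) := by
    rw [min_mul_of_nonneg _ _ hx₀.le]
    exact min_le_min (le_of_eq (by ring)) (by nlinarith)
  rw [hnx]
  calc min (C / 120) (1 / 8) * C / 6 * (n * x ^ 2)
      = n * (min (C / 120) (1 / 8) * x * (C * x) / 6) := by ring
    _ ≤ _ := by gcongr

lemma sq_le_exp_two_mul_log (p : ℕ) : (p : ℝ) ^ 2 ≤ exp (2 * log p) := by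
  rcases p.eq_zero_or_pos with rfl | hp
  · simp
  · rw [two_mul, exp_add, exp_log (Nat.cast_pos.2 hp), sq]

lemma ProbabilityTheory.HasLaw.integrable_comp {Ω 𝓧 E : Type*} [MeasurableSpace Ω]
    [MeasurableSpace 𝓧] [NormedAddCommGroup E] {P : Measure Ω} {ν : Measure 𝓧} {X : Ω → 𝓧}
    (hX : HasLaw X ν P) {f : 𝓧 → E} (hf : Integrable f ν) : Integrable (fun ω => f (X ω)) P := by
  rw [← hX.map_eq] at hf
  exact hf.comp_aemeasurable hX.aemeasurable

section

variable {Ω : Type*} [MeasurableSpace Ω] {μ : Measure Ω}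

lemma integrable_exp_mul_mul_of_hasLaw_add_sub {Y Z : Ω → ℝ} (hY : Measurable Y)
    (hZ : Measurable Z) {σ t : ℝ} {a b : ℝ≥0}
    (hA : HasLaw (fun ω => Y ω + Z ω) (gaussianReal 0 a) μ)
    (hB : HasLaw (fun ω => Y ω - Z ω) (gaussianReal 0 b) μ)
    (ha : (a : ℝ) = 2 + 2 * σ) (hb : (b : ℝ) = 2 - 2 * σ) (ht : |t| ≤ 1 / 8) :
    Integrable (fun ω => exp (t * (Y ω * Z ω))) μ := by
  have ha₀ := a.coe_nonneg
  have hb₀ := b.coe_nonneg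
  rw [abs_le] at ht
  have hA' := hA.integrable_comp (integrable_exp_mul_sq_gaussianReal (c := t / 2) (by nlinarith))
  have hB' := hB.integrable_comp (integrable_exp_mul_sq_gaussianReal (c := -t / 2) (by nlinarith))
  refine ((hA'.add hB').div_const 2).mono' (by fun_prop) (ae_of_all _ fun ω => ?_)
  rw [norm_of_nonneg (exp_pos _).le]
  exact exp_mul_mul_le t (Y ω) (Z ω)

lemma mgf_mul_le_of_hasLaw_add_sub {Y Z : Ω → ℝ} (hY : Measurable Y)
    (hZ : Measurable Z) {σ t : ℝ} {a b : ℝ≥0}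
    (hA : HasLaw (fun ω => Y ω + Z ω) (gaussianReal 0 a) μ)
    (hB : HasLaw (fun ω => Y ω - Z ω) (gaussianReal 0 b) μ)
    (ha : (a : ℝ) = 2 + 2 * σ) (hb : (b : ℝ) = 2 - 2 * σ) (ht : |t| ≤ 1 / 8) :
    mgf (fun ω => Y ω * Z ω) μ t ≤ exp (σ * t + 20 * t ^ 2) := by
  have ha₀ := a.coe_nonneg
  have hb₀ := b.coe_nonneg
  have ht' := abs_le.1 ht
  have hcA : 2 * (t / 2) * a < 1 := by nlinarith
  have hcB : 2 * (-t / 2) * b < 1 := by nlinarith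
  have hA' := hA.integrable_comp (integrable_exp_mul_sq_gaussianReal hcA)
  have hB' := hB.integrable_comp (integrable_exp_mul_sq_gaussianReal hcB)
  have eA : ∫ ω, exp (t / 2 * (Y ω + Z ω) ^ 2) ∂μ = (√(1 - 2 * (t / 2) * a))⁻¹ :=
    (hA.integral_comp (f := fun x => exp (t / 2 * x ^ 2)) (by fun_prop)).trans
      (integral_exp_mul_sq_gaussianReal hcA)
  have eB : ∫ ω, exp (-t / 2 * (Y ω - Z ω) ^ 2) ∂μ = (√(1 - 2 * (-t / 2) * b))⁻¹ :=
    (hB.integral_comp (f := fun x => exp (-t / 2 * x ^ 2)) (by fun_prop)).trans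
      (integral_exp_mul_sq_gaussianReal hcB)
  calc mgf (fun ω => Y ω * Z ω) μ t
      ≤ ∫ ω, (exp (t / 2 * (Y ω + Z ω) ^ 2) + exp (-t / 2 * (Y ω - Z ω) ^ 2)) / 2 ∂μ :=
        integral_mono (integrable_exp_mul_mul_of_hasLaw_add_sub hY hZ hA hB ha hb ht)
          ((hA'.add hB').div_const 2) fun ω => exp_mul_mul_le t (Y ω) (Z ω)
    _ = ((√(1 - t * (2 + 2 * σ)))⁻¹ + (√(1 + t * (2 - 2 * σ)))⁻¹) / 2 := by
        rw [integral_div, integral_add hA' hB', eA, eB, ha, hb]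
        ring_nf
    _ ≤ exp (σ * t + 20 * t ^ 2) :=
        inv_sqrt_add_inv_sqrt_le_exp (abs_le.2 ⟨by linarith, by linarith⟩) ht

section GaussianMarginals

variable {ι : Type*} [Fintype ι] {V : Ω → ι → ℝ}

lemma exists_hasLaw_add_mul_of_map_sum_mul (hV : Measurable V)
    (hgauss : ∀ l : ι → ℝ, ∃ s : ℝ≥0, μ.map (fun ω => ∑ j, l j * V ω j) = gaussianReal 0 s)
    (j k : ι) (c : ℝ) :
    ∃ s : ℝ≥0, HasLaw (fun ω => V ω j + c * V ω k) (gaussianReal 0 s) μ := by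
  classical
  obtain ⟨s, hs⟩ := hgauss (Pi.single j 1 + c • Pi.single k 1)
  refine ⟨s, by fun_prop, ?_⟩
  simpa [add_mul, Finset.sum_add_distrib, Pi.single_apply, mul_assoc] using hs

lemma integral_add_mul_sq {Y Z : Ω → ℝ} (hY : Integrable (fun ω => Y ω ^ 2) μ)
    (hZ : Integrable (fun ω => Z ω ^ 2) μ) (hYZ : AEStronglyMeasurable (fun ω => Y ω * Z ω) μ)
    (c : ℝ) :
    ∫ ω, (Y ω + c * Z ω) ^ 2 ∂μ =
      ∫ ω, Y ω * Y ω ∂μ + 2 * c * ∫ ω, Y ω * Z ω ∂μ + c ^ 2 * ∫ ω, Z ω * Z ω ∂μ := by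
  have hprod : Integrable (fun ω => Y ω * Z ω) μ := by
    refine (hY.add hZ).mono' hYZ (ae_of_all _ fun ω => ?_)
    rw [norm_mul, norm_eq_abs, norm_eq_abs, Pi.add_apply]
    nlinarith [two_mul_le_add_sq |Y ω| |Z ω|, sq_abs (Y ω), sq_abs (Z ω)]
  calc ∫ ω, (Y ω + c * Z ω) ^ 2 ∂μ
      = ∫ ω, (Y ω ^ 2 + 2 * c * (Y ω * Z ω)) + c ^ 2 * Z ω ^ 2 ∂μ := by congr with ω; ring
    _ = _ := by
      rw [integral_add (hY.fun_add (hprod.const_mul _)) (hZ.const_mul _),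
        integral_add hY (hprod.const_mul _), integral_const_mul, integral_const_mul]
      simp only [sq]

lemma integrable_exp_mul_and_mgf_le_of_map_sum_mul (hV : Measurable V)
    (hgauss : ∀ l : ι → ℝ, ∃ s : ℝ≥0, μ.map (fun ω => ∑ j, l j * V ω j) = gaussianReal 0 s)
    {S : Matrix ι ι ℝ} (hcov : ∀ j k, ∫ ω, V ω j * V ω k ∂μ = S j k) (hdiag : ∀ j, S j j = 1)
    (j k : ι) {t : ℝ} (ht : |t| ≤ 1 / 8) :
    Integrable (fun ω => exp (t * (V ω j * V ω k))) μ ∧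
      mgf (fun ω => V ω j * V ω k) μ t ≤ exp (S j k * t + 20 * t ^ 2) := by
  have hlaw := exists_hasLaw_add_mul_of_map_sum_mul hV hgauss
  have hsq : ∀ j, Integrable (fun ω => V ω j ^ 2) μ := fun j => by
    obtain ⟨s, hs⟩ := hlaw j j 0
    simpa using hs.integrable_comp (integrable_sq_gaussianReal s)
  have hvar : ∀ (c : ℝ) (s : ℝ≥0), HasLaw (fun ω => V ω j + c * V ω k) (gaussianReal 0 s) μ →
      (s : ℝ) = 1 + 2 * c * S j k + c ^ 2 := fun c s hs => by
    rw [← integral_sq_gaussianReal, ← hs.integral_comp (f := fun x => x ^ 2) (by fun_prop)]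
    rw [Function.comp_def, integral_add_mul_sq (hsq j) (hsq k) (by fun_prop), hcov, hcov,
      hcov, hdiag, hdiag]
    ring
  obtain ⟨a, hA⟩ := hlaw j k 1
  obtain ⟨b, hB⟩ := hlaw j k (-1)
  have ha : (a : ℝ) = 2 + 2 * S j k := by rw [hvar 1 a hA]; ring
  have hb : (b : ℝ) = 2 - 2 * S j k := by rw [hvar (-1) b hB]; ring
  simp only [one_mul, neg_one_mul, ← sub_eq_add_neg] at hA hB
  have hY : Measurable fun ω => V ω j := by fun_prop
  have hZ : Measurable fun ω => V ω k := by fun_prop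
  exact ⟨integrable_exp_mul_mul_of_hasLaw_add_sub hY hZ hA hB ha hb ht,
    mgf_mul_le_of_hasLaw_add_sub hY hZ hA hB ha hb ht⟩

end GaussianMarginals

section Concentration

variable {ι : Type*} [Fintype ι] {W : ι → Ω → ℝ} {σ K b ε : ℝ}

lemma measureReal_sum_ge_le_of_mgf_le (hW : ∀ i, Measurable (W i)) (hindep : iIndepFun W μ)
    (hK : 0 < K) (hb : 0 < b) (hε : 0 < ε)
    (hint : ∀ i t, |t| ≤ b → Integrable (fun ω => exp (t * W i ω)) μ)
    (hmgf : ∀ i t, |t| ≤ b → mgf (W i) μ t ≤ exp (σ * t + K * t ^ 2)) :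
    μ.real {ω | Fintype.card ι * (σ + ε) ≤ ∑ i, W i ω} ≤
      exp (-(Fintype.card ι * (min (ε / (2 * K)) b * ε / 2))) := by
  have := hindep.isProbabilityMeasure
  set n : ℝ := (Fintype.card ι : ℝ)
  set u := min (ε / (2 * K)) b
  have hu₀ : 0 < u := lt_min (by positivity) hb
  have hub : |u| ≤ b := by rw [abs_of_pos hu₀]; exact min_le_right _ _
  have huK : K * u ≤ ε / 2 := by
    have := min_le_left (ε / (2 * K)) b
    rw [le_div_iff₀ (by positivity)] at this
    linarith
  have hsum_mgf : mgf (∑ i, W i) μ u ≤ exp (n * (σ * u + K * u ^ 2)) := by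
    rw [hindep.mgf_sum hW]
    calc ∏ i, mgf (W i) μ u ≤ ∏ _i : ι, exp (σ * u + K * u ^ 2) :=
          Finset.prod_le_prod (fun _ _ => mgf_nonneg) fun i _ => hmgf i u hub
      _ = exp (n * (σ * u + K * u ^ 2)) := by
          rw [Finset.prod_const, Finset.card_univ, ← exp_nat_mul]
  have hchernoff := measure_ge_le_exp_mul_mgf (X := ∑ i, W i) (n * (σ + ε)) hu₀.le
    (hindep.integrable_exp_mul_sum hW fun i _ => hint i u hub)
  simp only [Finset.sum_apply] at hchernoff
  calc _ ≤ exp (-u * (n * (σ + ε))) * mgf (∑ i, W i) μ u := hchernoff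
    _ ≤ exp (-u * (n * (σ + ε))) * exp (n * (σ * u + K * u ^ 2)) := by gcongr
    _ = exp (-(n * (u * ε - K * u * u))) := by rw [← exp_add]; ring_nf
    _ ≤ exp (-(n * (u * ε / 2))) := by
        gcongr
        nlinarith

lemma measureReal_abs_sum_sub_ge_le_of_mgf_le (hW : ∀ i, Measurable (W i))
    (hindep : iIndepFun W μ) (hK : 0 < K) (hb : 0 < b) (hε : 0 < ε)
    (hint : ∀ i t, |t| ≤ b → Integrable (fun ω => exp (t * W i ω)) μ)
    (hmgf : ∀ i t, |t| ≤ b → mgf (W i) μ t ≤ exp (σ * t + K * t ^ 2)) :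
    μ.real {ω | Fintype.card ι * ε ≤ |∑ i, W i ω - Fintype.card ι * σ|} ≤
      2 * exp (-(Fintype.card ι * (min (ε / (2 * K)) b * ε / 2))) := by
  have := hindep.isProbabilityMeasure
  have hupper := measureReal_sum_ge_le_of_mgf_le hW hindep hK hb hε hint hmgf
  have hlower := measureReal_sum_ge_le_of_mgf_le (W := fun i ω => -W i ω) (σ := -σ)
    (fun i => (hW i).neg) (hindep.comp (fun _ x => -x) fun _ => measurable_neg) hK hb hε
    (fun i t ht => by simpa only [mul_neg, neg_mul] using hint i (-t) (by rwa [abs_neg]))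
    (fun i t ht => by
      rw [show (fun ω => -W i ω) = -W i from rfl, mgf_neg]
      simpa only [mul_neg, neg_mul, neg_sq] using hmgf i (-t) (by rwa [abs_neg]))
  calc _ ≤ μ.real ({ω | Fintype.card ι * (σ + ε) ≤ ∑ i, W i ω} ∪
          {ω | Fintype.card ι * (-σ + ε) ≤ ∑ i, -W i ω}) := by
        refine measureReal_mono (fun ω hω => ?_)
        simp only [Set.mem_ofPred_eq, Set.mem_union, Finset.sum_neg_distrib] at hω ⊢
        rcases le_abs'.1 hω with h | h
        · right; linarith
        · left; linarith
    _ ≤ _ := (measureReal_union_le _ _).trans (by linarith)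

end Concentration

lemma measureReal_abs_sum_mul_div_le_le {n : ℕ} (hn : 0 < n) {ι : Type*} [Fintype ι]
    {X : Fin n → Ω → ι → ℝ} {S : Matrix ι ι ℝ} (hX : ∀ i, Measurable (X i))
    (hindep : iIndepFun X μ)
    (hgauss : ∀ i (l : ι → ℝ), ∃ s : ℝ≥0,
      μ.map (fun ω => ∑ j, l j * X i ω j) = gaussianReal 0 s)
    (hcov : ∀ i j k, ∫ ω, X i ω j * X i ω k ∂μ = S j k) (hdiag : ∀ j, S j j = 1)
    {a b : ι} {τ : ℝ} (hτ : 0 < τ) (hab : τ ≤ |S a b|) :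
    μ.real {ω | |∑ i, X i ω a * X i ω b| / n ≤ 2 / 3 * τ} ≤
      2 * exp (-(n * (min (τ / 120) (1 / 8) * τ / 6))) := by
  have := hindep.isProbabilityMeasure
  have hrow := fun i t (ht : |t| ≤ 1 / 8) =>
    integrable_exp_mul_and_mgf_le_of_map_sum_mul (hX i) (hgauss i) (hcov i) hdiag a b ht
  have htail := measureReal_abs_sum_sub_ge_le_of_mgf_le (W := fun i ω => X i ω a * X i ω b)
    (K := 20) (ε := τ / 3) (fun i => by fun_prop)
    (hindep.comp (fun _ v => v a * v b) fun _ => by fun_prop) (by norm_num)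
    (by norm_num : (0 : ℝ) < 1 / 8) (by positivity) (fun i t ht => (hrow i t ht).1)
    (fun i t ht => (hrow i t ht).2)
  rw [Fintype.card_fin] at htail
  refine (measureReal_mono fun ω hω => ?_).trans (htail.trans_eq (by ring_nf))
  simp only [Set.mem_ofPred_eq] at hω ⊢
  rw [div_le_iff₀ (by positivity)] at hω
  have h := abs_sub_abs_le_abs_sub (n * S a b) (∑ i, X i ω a * X i ω b)
  rw [abs_sub_comm, abs_mul, Nat.abs_cast] at h
  nlinarith

lemma one_sub_card_mul_le_measureReal_forall [IsProbabilityMeasure μ] {ι : Type*} (E : Finset ι)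
    (P : ι → Ω → Prop) {r : ℝ} (h : ∀ e ∈ E, μ.real {ω | ¬ P e ω} ≤ r) :
    1 - #E * r ≤ μ.real {ω | ∀ e ∈ E, P e ω} := by
  have hunion : μ.real (⋃ e ∈ E, {ω | ¬ P e ω}) ≤ #E * r :=
    (measureReal_biUnion_finset_le E _).trans (by simpa using Finset.sum_le_card_nsmul E _ r h)
  have hcover : Set.univ ⊆ {ω | ∀ e ∈ E, P e ω} ∪ ⋃ e ∈ E, {ω | ¬ P e ω} := fun ω _ => by
    by_cases hω : ∀ e ∈ E, P e ω
    · exact Or.inl hω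
    · right; simpa using hω
  have := (measureReal_mono (μ := μ) hcover).trans (measureReal_union_le _ _)
  rw [probReal_univ] at this
  linarith

end

/-- Sure screening property of GRASS:  under the minimum-signal assumption
`min_{(a,b)∈E} |σ_ab| ≥ C₁ n^{−κ}` and the growth condition
`log p = C₃ n^ξ`, `ξ ∈ (0, 1−2κ)`, with threshold `γₙ = (2/3) C₁ n^{−κ}`,
there are constants `C₄, C₅ > 0` with
`P(E ⊆ Ê_{γₙ}) ≥ 1 − C₄ exp(−C₅ n^{1−2κ})`. -/
theorem grass_sure_screening
    {Ω : Type*} [MeasurableSpace Ω] (μ : Measure Ω) [IsProbabilityMeasure μ]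
    (κ C₁ C₃ ξ : ℝ) (hκ : 0 < κ ∧ κ < 1 / 2) (hC₁ : 0 < C₁) (hC₃ : 0 < C₃)
    (hξ : 0 < ξ ∧ ξ < 1 - 2 * κ) :
    ∃ C₄ : ℝ, 0 < C₄ ∧ ∃ C₅ : ℝ, 0 < C₅ ∧
      ∀ (n p : ℕ) (X : Fin n → Ω → Fin p → ℝ)
        (S : Matrix (Fin p) (Fin p) ℝ) (E : Finset (Fin p × Fin p)),
        0 < n →
        Real.log p = C₃ * (n : ℝ) ^ ξ →
        (∀ i, Measurable (X i)) →
        iIndepFun X μ →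
        (∀ i : Fin n, ∀ l : Fin p → ℝ, ∃ s : NNReal,
          Measure.map (fun ω => ∑ j, l j * X i ω j) μ = gaussianReal 0 s) →
        (∀ (i : Fin n) (j k : Fin p), ∫ ω, X i ω j * X i ω k ∂μ = S j k) →
        (∀ j, S j j = 1) →
        S.PosDef →
        -- `E` is the edge set of the Gaussian graphical model:
        (∀ a b : Fin p, (a, b) ∈ E ↔ a < b ∧ S⁻¹ a b ≠ 0) →
        -- Assumption 1 (minimum signal):
        (∀ e ∈ E, C₁ * (n : ℝ) ^ (-κ) ≤ |S e.1 e.2|) →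
        1 - C₄ * Real.exp (-C₅ * (n : ℝ) ^ (1 - 2 * κ)) ≤
          (μ {ω | ∀ e ∈ E,
              (2 / 3) * C₁ * (n : ℝ) ^ (-κ) <
                |∑ i, X i ω e.1 * X i ω e.2| / n}).toReal := by
  set c₀ := min (C₁ / 120) (1 / 8) * C₁ / 6
  obtain ⟨K, hK⟩ := exists_mul_rpow_le_mul_rpow_add hξ.1.le hξ.2 (by positivity : 0 < 2 * C₃)
    (by positivity : 0 < c₀ / 2)
  refine ⟨2 * exp K, by positivity, c₀ / 2, by positivity, ?_⟩
  intro n p X S E hn hlogp hX hindep hgauss hS hdiag _ _ hmin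
  have hn₁ : (1 : ℝ) ≤ n := by exact_mod_cast hn
  have hedge : ∀ e ∈ E, μ.real {ω | ¬ (2 / 3 * C₁ * (n : ℝ) ^ (-κ) <
      |∑ i, X i ω e.1 * X i ω e.2| / n)} ≤ 2 * exp (-(c₀ * n ^ (1 - 2 * κ))) := fun e he => by
    simp only [not_lt, mul_assoc]
    refine (measureReal_abs_sum_mul_div_le_le hn hX hindep hgauss hS hdiag (by positivity)
      (hmin e he)).trans ?_
    exact mul_le_mul_of_nonneg_left
      (exp_le_exp.2 (neg_le_neg (mul_rpow_one_sub_two_mul_le hn₁ hκ.1.le hC₁))) zero_le_two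
  have hcard : (#E : ℝ) ≤ exp (c₀ / 2 * n ^ (1 - 2 * κ) + K) :=
    calc (#E : ℝ) ≤ p ^ 2 := by exact_mod_cast (card_le_univ E).trans_eq (by simp [sq])
      _ ≤ exp (2 * log p) := sq_le_exp_two_mul_log p
      _ ≤ _ := exp_le_exp.2 (by rw [hlogp, ← mul_assoc]; exact hK n n.cast_nonneg)
  refine le_trans ?_ (one_sub_card_mul_le_measureReal_forall E _ hedge)
  calc 1 - 2 * exp K * exp (-(c₀ / 2) * n ^ (1 - 2 * κ))
      = 1 - exp (c₀ / 2 * n ^ (1 - 2 * κ) + K) * (2 * exp (-(c₀ * n ^ (1 - 2 * κ)))) := by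
        rw [mul_left_comm, ← exp_add, mul_assoc, ← exp_add]; ring_nf
    _ ≤ _ := by gcongr
end

section
/- (Lemma 3) Let X be a mean-zero p-dimensional random vector with covariance Σ, and Y with E(Y)=0, E(Y²)=1, satisfying Y = X^Tβ + ε with ε uncorrelated with X. Define S = {j : |E(Y X_j)| > C n^{−κ}} for a constant C > 0. Then |S| ≤ C^{−2} n^{2κ} λ_max(Σ). -/
open MeasureTheory Finset Matrix

lemma quad_bound_aux {p : ℕ} (S : Matrix (Fin p) (Fin p) ℝ) (hS : S.PosDef)
    (β : Fin p → ℝ) :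
    (S *ᵥ β) ⬝ᵥ (S *ᵥ β) ≤ (⨆ i, hS.1.eigenvalues i) * (β ⬝ᵥ (S *ᵥ β)) := by
  set U : Matrix (Fin p) (Fin p) ℝ := (hS.1.eigenvectorUnitary : Matrix (Fin p) (Fin p) ℝ) with hU
  set lam := hS.1.eigenvalues with hlam
  set c : Fin p → ℝ := (star U) *ᵥ β with hc
  have hUU : star U * U = 1 := hS.1.eigenvectorUnitary.2.1
  have hUU' : U * star U = 1 := hS.1.eigenvectorUnitary.2.2
  have hspec : S = U * Matrix.diagonal lam * star U := by
    simpa using hS.1.spectral_theorem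
  have hSb : S *ᵥ β = U *ᵥ (Matrix.diagonal lam *ᵥ c) := by
    rw [hspec, hc, ← mulVec_mulVec, ← mulVec_mulVec]
  have hdot : ∀ x y : Fin p → ℝ, (U *ᵥ x) ⬝ᵥ (U *ᵥ y) = x ⬝ᵥ y := by
    intro x y
    rw [dotProduct_mulVec, vecMul_mulVec]
    have h : Uᵀ * U = 1 := by simpa [Matrix.star_eq_conjTranspose] using hUU
    rw [h]
    simp
  have hβ : U *ᵥ c = β := by rw [hc, mulVec_mulVec, hUU', one_mulVec]
  have h1 : (S *ᵥ β) ⬝ᵥ (S *ᵥ β) = ∑ i, lam i ^ 2 * c i ^ 2 := by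
    rw [hSb, hdot]
    simp only [dotProduct, mulVec_diagonal]
    exact Finset.sum_congr rfl fun i _ => by ring
  have h2 : β ⬝ᵥ (S *ᵥ β) = ∑ i, lam i * c i ^ 2 := by
    rw [hSb, ← hβ, hdot]
    simp only [dotProduct, mulVec_diagonal]
    exact Finset.sum_congr rfl fun i _ => by ring
  rw [h1, h2, Finset.mul_sum]
  apply Finset.sum_le_sum
  intro i _
  have hle : lam i ≤ ⨆ j, lam j := le_ciSup (Set.Finite.bddAbove (Set.finite_range lam)) i
  calc lam i ^ 2 * c i ^ 2 = lam i * (lam i * c i ^ 2) := by ring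
    _ ≤ (⨆ j, lam j) * (lam i * c i ^ 2) :=
        mul_le_mul_of_nonneg_right hle (mul_nonneg (hS.eigenvalues_pos i).le (sq_nonneg _))

lemma linear_model_aux {Ω : Type*} [MeasurableSpace Ω] (μ : Measure Ω) [IsProbabilityMeasure μ]
    (p : ℕ) (X : Ω → Fin p → ℝ) (Y ε : Ω → ℝ) (β : Fin p → ℝ)
    (S : Matrix (Fin p) (Fin p) ℝ) (hS : S.PosDef)
    (hcov : ∀ j k, ∫ ω, X ω j * X ω k ∂μ = S j k)
    (hintXX : ∀ j k, Integrable (fun ω => X ω j * X ω k) μ)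
    (hintXε : ∀ j, Integrable (fun ω => X ω j * ε ω) μ)
    (hY : ∀ ω, Y ω = (∑ j, β j * X ω j) + ε ω)
    (hYvar : ∫ ω, Y ω ^ 2 ∂μ = 1)
    (huncorr : ∀ j, ∫ ω, X ω j * ε ω ∂μ = 0) :
    (β ⬝ᵥ (S *ᵥ β) ≤ 1) ∧ ∀ j, ∫ ω, Y ω * X ω j ∂μ = (S *ᵥ β) j := by
  set L : Ω → ℝ := fun ω => ∑ j, β j * X ω j with hL
  have hLL : ∀ ω, L ω * L ω = ∑ j, ∑ k, (β j * β k) * (X ω j * X ω k) := by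
    intro ω
    rw [hL]
    simp only [Finset.sum_mul_sum]
    exact Finset.sum_congr rfl fun j _ => Finset.sum_congr rfl fun k _ => by ring
  have hintL2 : Integrable (fun ω => L ω * L ω) μ := by
    have : (fun ω => L ω * L ω)
        = fun ω => ∑ j, ∑ k, (β j * β k) * (X ω j * X ω k) := funext hLL
    rw [this]
    exact integrable_finset_sum _ fun j _ => integrable_finset_sum _ fun k _ =>
      ((hintXX j k).const_mul _)
  have hintLε : Integrable (fun ω => L ω * ε ω) μ := by
    have : (fun ω => L ω * ε ω) = fun ω => ∑ j, β j * (X ω j * ε ω) := by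
      funext ω; rw [hL, Finset.sum_mul]
      exact Finset.sum_congr rfl fun j _ => by ring
    rw [this]
    exact integrable_finset_sum _ fun j _ => ((hintXε j).const_mul _)
  have hintY2 : Integrable (fun ω => Y ω ^ 2) μ := by
    by_contra h
    rw [integral_undef h] at hYvar
    norm_num at hYvar
  have hεY : ∀ ω, ε ω = Y ω - L ω := fun ω => by rw [hY ω]; ring
  have hintYL : Integrable (fun ω => Y ω * L ω) μ := by
    have : (fun ω => Y ω * L ω) = fun ω => L ω * L ω + L ω * ε ω := by
      funext ω; rw [hY ω]; ring
    rw [this]; exact hintL2.add hintLε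
  have hintε2 : Integrable (fun ω => ε ω ^ 2) μ := by
    have : (fun ω => ε ω ^ 2) = fun ω => Y ω ^ 2 - Y ω * L ω - (Y ω * L ω - L ω * L ω) := by
      funext ω; rw [hεY ω]; ring
    rw [this]; exact (hintY2.sub hintYL).sub (hintYL.sub hintL2)
  have hIL2 : ∫ ω, L ω * L ω ∂μ = β ⬝ᵥ (S *ᵥ β) := by
    have : ∫ ω, L ω * L ω ∂μ = ∑ j, ∑ k, (β j * β k) * S j k := by
      rw [funext hLL, integral_finset_sum _ fun j _ => integrable_finset_sum _ fun k _ =>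
        ((hintXX j k).const_mul _)]
      refine Finset.sum_congr rfl fun j _ => ?_
      rw [integral_finset_sum _ fun k _ => ((hintXX j k).const_mul _)]
      exact Finset.sum_congr rfl fun k _ => by rw [integral_const_mul _ _, hcov]
    rw [this]
    simp only [dotProduct, mulVec, dotProduct, Finset.mul_sum]
    exact Finset.sum_congr rfl fun j _ => Finset.sum_congr rfl fun k _ => by ring
  have hILε : ∫ ω, L ω * ε ω ∂μ = 0 := by
    have : (fun ω => L ω * ε ω) = fun ω => ∑ j, β j * (X ω j * ε ω) := by
      funext ω; rw [hL, Finset.sum_mul]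
      exact Finset.sum_congr rfl fun j _ => by ring
    rw [this, integral_finset_sum _ fun j _ => ((hintXε j).const_mul _)]
    simp [integral_const_mul _ _, huncorr]
  constructor
  · have hsplit : ∫ ω, Y ω ^ 2 ∂μ
        = ∫ ω, L ω * L ω ∂μ + 2 * ∫ ω, L ω * ε ω ∂μ + ∫ ω, ε ω ^ 2 ∂μ := by
      have h : (fun ω => Y ω ^ 2)
          = fun ω => (L ω * L ω + 2 * (L ω * ε ω)) + ε ω ^ 2 := by
        funext ω; rw [hY ω]; ring
      have hi2 : Integrable (fun ω => 2 * (L ω * ε ω)) μ := hintLε.const_mul 2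
      have hi1 : Integrable (fun ω => L ω * L ω + 2 * (L ω * ε ω)) μ := hintL2.add hi2
      rw [h, integral_add hi1 hintε2, integral_add hintL2 hi2, integral_const_mul _ _]
    have hε2 : 0 ≤ ∫ ω, ε ω ^ 2 ∂μ := integral_nonneg fun ω => sq_nonneg _
    rw [hYvar, hILε] at hsplit
    rw [← hIL2]
    linarith
  · intro j
    have : (fun ω => Y ω * X ω j) = fun ω => (∑ k, β k * (X ω k * X ω j)) + X ω j * ε ω := by
      funext ω; rw [hY ω, add_mul, Finset.sum_mul]
      congr 1
      · exact Finset.sum_congr rfl fun k _ => by ring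
      · ring
    rw [this, integral_add (integrable_finset_sum _ fun k _ => ((hintXX k j).const_mul _))
      (hintXε j), huncorr, add_zero,
      integral_finset_sum _ fun k _ => ((hintXX k j).const_mul _)]
    have hsym : ∀ k, S k j = S j k := fun k => by
      have := congrFun (congrFun hS.1 j) k
      simpa [Matrix.conjTranspose_apply] using this
    calc ∑ k, ∫ ω, β k * (X ω k * X ω j) ∂μ = ∑ k, β k * S k j := by
          exact Finset.sum_congr rfl fun k _ => by rw [integral_const_mul, hcov]
      _ = ∑ k, S j k * β k := Finset.sum_congr rfl fun k _ => by rw [hsym k]; ring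
      _ = (S *ᵥ β) j := rfl

/-- Lemma 3: in the linear model `Y = Xᵀβ + ε` with `ε` uncorrelated with
`X`, `E Y = 0`, `E Y² = 1`, the number of coordinates `j` with
`|E(Y Xⱼ)| > C n^{−κ}` is at most `C⁻² n^{2κ} λ_max(S)`. -/
theorem marginal_covariance_size_bound
    {Ω : Type*} [MeasurableSpace Ω] (μ : Measure Ω) [IsProbabilityMeasure μ]
    (p : ℕ) (hp : 0 < p) (X : Ω → Fin p → ℝ) (Y ε : Ω → ℝ) (β : Fin p → ℝ)
    (S : Matrix (Fin p) (Fin p) ℝ) (hS : S.PosDef)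
    (hmean : ∀ j, ∫ ω, X ω j ∂μ = 0)
    (hcov : ∀ j k, ∫ ω, X ω j * X ω k ∂μ = S j k)
    (hintXX : ∀ j k, Integrable (fun ω => X ω j * X ω k) μ)
    (hintXε : ∀ j, Integrable (fun ω => X ω j * ε ω) μ)
    (hY : ∀ ω, Y ω = (∑ j, β j * X ω j) + ε ω)
    (hYmean : ∫ ω, Y ω ∂μ = 0) (hYvar : ∫ ω, Y ω ^ 2 ∂μ = 1)
    (huncorr : ∀ j, ∫ ω, X ω j * ε ω ∂μ = 0)
    (n : ℕ) (hn : 0 < n) (κ C : ℝ) (hC : 0 < C) :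
    ((Finset.univ.filter fun j : Fin p =>
        C * (n : ℝ) ^ (-κ) < |∫ ω, Y ω * X ω j ∂μ|).card : ℝ) ≤
      C⁻¹ ^ 2 * (n : ℝ) ^ (2 * κ) * ⨆ i : Fin p, hS.1.eigenvalues i := by
  obtain ⟨hβSβ, hρ⟩ := linear_model_aux μ p X Y ε β S hS hcov hintXX hintXε hY hYvar huncorr
  haveI : Nonempty (Fin p) := ⟨⟨0, hp⟩⟩
  set lmax := ⨆ i : Fin p, hS.1.eigenvalues i with hlmax
  have hlmax_pos : 0 < lmax :=
    lt_of_lt_of_le (hS.eigenvalues_pos ⟨0, hp⟩)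
      (le_ciSup (Set.Finite.bddAbove (Set.finite_range _)) _)
  have hsum : ∑ j, (∫ ω, Y ω * X ω j ∂μ) ^ 2 ≤ lmax := by
    have h1 : ∑ j, (∫ ω, Y ω * X ω j ∂μ) ^ 2 = (S *ᵥ β) ⬝ᵥ (S *ᵥ β) := by
      simp only [dotProduct]
      exact Finset.sum_congr rfl fun j _ => by rw [hρ j]; ring
    have h2 := quad_bound_aux S hS β
    have h3 : lmax * (β ⬝ᵥ (S *ᵥ β)) ≤ lmax * 1 :=
      mul_le_mul_of_nonneg_left hβSβ hlmax_pos.le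
    rw [h1]
    calc (S *ᵥ β) ⬝ᵥ (S *ᵥ β) ≤ lmax * (β ⬝ᵥ (S *ᵥ β)) := h2
      _ ≤ lmax * 1 := h3
      _ = lmax := mul_one _
  set t : ℝ := C * (n : ℝ) ^ (-κ) with ht
  have hnpos : (0 : ℝ) < (n : ℝ) := by exact_mod_cast hn
  have htpos : 0 < t := mul_pos hC (Real.rpow_pos_of_pos hnpos _)
  set T := Finset.univ.filter fun j : Fin p => t < |∫ ω, Y ω * X ω j ∂μ| with hT
  have hcard : (T.card : ℝ) * t ^ 2 ≤ lmax := by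
    have h1 : (T.card : ℝ) * t ^ 2 = ∑ _j ∈ T, t ^ 2 := by
      rw [Finset.sum_const, nsmul_eq_mul]
    have h2 : ∑ _j ∈ T, t ^ 2 ≤ ∑ j ∈ T, (∫ ω, Y ω * X ω j ∂μ) ^ 2 := by
      refine Finset.sum_le_sum fun j hj => ?_
      have hj' : t < |∫ ω, Y ω * X ω j ∂μ| := (Finset.mem_filter.mp hj).2
      calc t ^ 2 ≤ |∫ ω, Y ω * X ω j ∂μ| ^ 2 :=
            pow_le_pow_left₀ htpos.le hj'.le 2
        _ = (∫ ω, Y ω * X ω j ∂μ) ^ 2 := sq_abs _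
    have h3 : ∑ j ∈ T, (∫ ω, Y ω * X ω j ∂μ) ^ 2
        ≤ ∑ j, (∫ ω, Y ω * X ω j ∂μ) ^ 2 :=
      Finset.sum_le_sum_of_subset_of_nonneg (Finset.subset_univ T)
        (fun j _ _ => sq_nonneg _)
    linarith [hsum]
  have hkey : t ^ 2 * (C⁻¹ ^ 2 * (n : ℝ) ^ (2 * κ)) = 1 := by
    have hpow : ((n : ℝ) ^ (-κ)) ^ 2 * (n : ℝ) ^ (2 * κ) = 1 := by
      rw [← Real.rpow_natCast ((n : ℝ) ^ (-κ)) 2, ← Real.rpow_mul hnpos.le,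
        ← Real.rpow_add hnpos]
      norm_num
      rw [show -(κ * 2) + 2 * κ = 0 by ring, Real.rpow_zero]
    have hCC : C ^ 2 * C⁻¹ ^ 2 = 1 := by
      field_simp
    calc t ^ 2 * (C⁻¹ ^ 2 * (n : ℝ) ^ (2 * κ))
        = (C ^ 2 * C⁻¹ ^ 2) * (((n : ℝ) ^ (-κ)) ^ 2 * (n : ℝ) ^ (2 * κ)) := by
          rw [ht]; ring
      _ = 1 := by rw [hCC, hpow, one_mul]
  have hK : 0 ≤ C⁻¹ ^ 2 * (n : ℝ) ^ (2 * κ) := by positivity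
  calc (T.card : ℝ) = (T.card : ℝ) * (t ^ 2 * (C⁻¹ ^ 2 * (n : ℝ) ^ (2 * κ))) := by
        rw [hkey, mul_one]
    _ = ((T.card : ℝ) * t ^ 2) * (C⁻¹ ^ 2 * (n : ℝ) ^ (2 * κ)) := by ring
    _ ≤ lmax * (C⁻¹ ^ 2 * (n : ℝ) ^ (2 * κ)) := mul_le_mul_of_nonneg_right hcard hK
    _ = C⁻¹ ^ 2 * (n : ℝ) ^ (2 * κ) * lmax := by ring
end
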